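/- Let R be a commutative domain and Λ an R-algebra. Let L, M be Λ-modules that are finitely generated over R, and suppose Ext^1_Λ(L, tM) = 0, where tM is the R-torsion submodule of M. Then the quotient Hom_Λ(L,M)/t(Hom_Λ(L,M)) of Hom_Λ(L,M) by its R-torsion submodule is isomorphic to Hom_Λ(L/tL, M/tM). -/

import Mathlib

/-!
Composition with `M → M/tM` maps `Hom(L, M)` onto `Hom(L, M/tM)`, the obstruction to lifting
lying in `Ext¹(L, tM)`. Its kernel `Hom(L, tM)` is the torsion of `Hom(L, M)`: as `L` is finitely
generated, a single nonzero scalar kills the image of a generating set. Finally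
`Hom(L, M/tM) = Hom(L/tL, M/tM)`, since `M/tM` is torsion-free.
-/

open CategoryTheory CategoryTheory.Abelian

universe u

theorem CategoryTheory.ShortComplex.ShortExact.exists_comp_g_eq_of_subsingleton_ext
    {C : Type*} [Category C] [Abelian C] [HasExt C]
    {S : ShortComplex C} (hS : S.ShortExact) {X : C} [Subsingleton (Ext X S.X₁ 1)]
    (g : X ⟶ S.X₃) : ∃ f : X ⟶ S.X₂, f ≫ S.g = g := by
  obtain ⟨x, hx⟩ :=
    Ext.covariant_sequence_exact₃ X hS (Ext.mk₀ g) rfl (Subsingleton.elim _ _)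
  obtain ⟨f, rfl⟩ := (Ext.mk₀_bijective X S.X₂).2 x
  exact ⟨f, (Ext.mk₀_bijective X S.X₃).1 (by rwa [← Ext.mk₀_comp_mk₀])⟩

theorem Submodule.exists_mkQ_comp_eq_of_subsingleton_ext
    {Λ L M : Type u} [Ring Λ] [HasExt.{u} (ModuleCat.{u} Λ)]
    [AddCommGroup L] [Module Λ L] [AddCommGroup M] [Module Λ M] (N : Submodule Λ M)
    [Subsingleton (Ext (ModuleCat.of Λ L) (ModuleCat.of Λ N) 1)] (g : L →ₗ[Λ] M ⧸ N) :
    ∃ f : L →ₗ[Λ] M, N.mkQ ∘ₗ f = g := by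
  have hN := LinearMap.exact_subtype_mkQ N
  have hS := ModuleCat.shortComplex_shortExact
    (ModuleCat.shortComplexOfCompEqZero N.subtype N.mkQ hN.linearMap_comp_eq_zero)
    hN N.injective_subtype N.mkQ_surjective
  obtain ⟨f, hf⟩ := hS.exists_comp_g_eq_of_subsingleton_ext (X := ModuleCat.of Λ L)
    (ModuleCat.ofHom g)
  exact ⟨f.hom, congr_arg ModuleCat.Hom.hom hf⟩

namespace Submodule

variable {R Λ L M : Type*} [CommRing R] [Ring Λ] [Algebra R Λ]
  [AddCommGroup L] [Module Λ L] [Module R L] [IsScalarTower R Λ L]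
  [AddCommGroup M] [Module Λ M] [Module R M] [IsScalarTower R Λ M]

theorem mem_torsion_iff_exists_ne_zero [IsDomain R] {x : M} :
    x ∈ torsion R M ↔ ∃ r : R, r ≠ 0 ∧ r • x = 0 := by
  simp [mem_nonZeroDivisors_iff_ne_zero]

theorem mem_torsion_linearMap_iff [SMulCommClass Λ R M] [Module.Finite R L] (f : L →ₗ[Λ] M) :
    f ∈ torsion R (L →ₗ[Λ] M) ↔ ∀ x, f x ∈ torsion R M := by
  refine ⟨fun ⟨a, ha⟩ x => ⟨a, by simpa using congr($ha x)⟩, fun hf => ?_⟩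
  have hN : Module.IsTorsion R (LinearMap.range (f.restrictScalars R)) := by
    rintro ⟨_, x, rfl⟩
    obtain ⟨a, ha⟩ := hf x
    exact ⟨a, Subtype.ext ha⟩
  obtain ⟨c, hc, hc0⟩ := annihilator_top_inter_nonZeroDivisors hN
  refine ⟨⟨c, hc0⟩, LinearMap.ext fun x => ?_⟩
  simpa [Subtype.ext_iff] using mem_annihilator.1 hc ⟨f x, x, rfl⟩ mem_top

theorem _root_.LinearMap.apply_eq_zero_of_mem_torsion (q : Submodule Λ M)
    (hq : q.restrictScalars R = torsion R M) (g : L →ₗ[Λ] M ⧸ q) {x : L}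
    (hx : x ∈ torsion R L) : g x = 0 := by
  obtain ⟨m, hm⟩ := q.mkQ_surjective (g x)
  obtain ⟨a, ha⟩ := hx
  have ham : (a : R) • m ∈ torsion R M := by
    rw [← hq, restrictScalars_mem, ← Quotient.mk_eq_zero, Quotient.mk_smul, ← mkQ_apply, hm,
      ← LinearMap.map_smul_of_tower, ← Submonoid.smul_def, ha, map_zero]
  obtain ⟨b, hb⟩ := ham
  rw [← hm, mkQ_apply, Quotient.mk_eq_zero, ← restrictScalars_mem R, hq]
  exact ⟨b * a, by rwa [mul_smul]⟩

theorem bijective_lcomp_mkQ_of_le_torsion [SMulCommClass Λ R M] (p : Submodule Λ L)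
    (q : Submodule Λ M) (hp : p.restrictScalars R ≤ torsion R L)
    (hq : q.restrictScalars R = torsion R M) :
    Function.Bijective (LinearMap.lcomp R (M ⧸ q) p.mkQ) :=
  ⟨LinearMap.lcomp_injective_of_surjective _ p.mkQ_surjective, fun g =>
    have hg : p ≤ LinearMap.ker g := fun _ hx => g.apply_eq_zero_of_mem_torsion q hq (hp hx)
    ⟨p.liftQ g hg, p.liftQ_mkQ g hg⟩⟩

end Submodule

open Submodule in
theorem hom_mod_torsion_equiv_hom_of_quotients_general
    (R : Type u) [CommRing R] [IsDomain R]
    (Λ : Type u) [Ring Λ] [Algebra R Λ] [HasExt.{u} (ModuleCat.{u} Λ)]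
    (L M : Type u)
    [AddCommGroup L] [Module Λ L] [Module R L] [IsScalarTower R Λ L] [Module.Finite R L]
    [AddCommGroup M] [Module Λ M] [Module R M] [IsScalarTower R Λ M]
    [SMulCommClass Λ R M]
    (tL : Submodule Λ L) (htL : ∀ x : L, x ∈ tL ↔ ∃ r : R, r ≠ 0 ∧ r • x = 0)
    (tM : Submodule Λ M) (htM : ∀ x : M, x ∈ tM ↔ ∃ r : R, r ≠ 0 ∧ r • x = 0)
    (hExt : Subsingleton (Ext (ModuleCat.of Λ L) (ModuleCat.of Λ (↥tM)) 1)) :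
    Nonempty
      (((L →ₗ[Λ] M) ⧸ Submodule.torsion R (L →ₗ[Λ] M)) ≃ₗ[R]
        ((L ⧸ tL) →ₗ[Λ] (M ⧸ tM))) := by
  have htL' : tL.restrictScalars R = torsion R L :=
    ext fun x => (htL x).trans mem_torsion_iff_exists_ne_zero.symm
  have htM' : tM.restrictScalars R = torsion R M :=
    ext fun x => (htM x).trans mem_torsion_iff_exists_ne_zero.symm
  let ψ : (L →ₗ[Λ] M) →ₗ[R] L →ₗ[Λ] M ⧸ tM := LinearMap.compRight R tM.mkQ
  have hker : LinearMap.ker ψ = torsion R (L →ₗ[Λ] M) := by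
    ext f
    simp only [LinearMap.mem_ker, ψ, LinearMap.compRight_apply, LinearMap.ext_iff,
      LinearMap.comp_apply, mkQ_apply, Quotient.mk_eq_zero, LinearMap.zero_apply,
      mem_torsion_linearMap_iff, ← htM', restrictScalars_mem]
  have hψ : Function.Surjective ψ := tM.exists_mkQ_comp_eq_of_subsingleton_ext
  exact ⟨quotEquivOfEq _ _ hker.symm ≪≫ₗ ψ.quotKerEquivOfSurjective hψ ≪≫ₗ
    (LinearEquiv.ofBijective _ (bijective_lcomp_mkQ_of_le_torsion tL tM htL'.le htM')).symm⟩

/-- Let `R` be a commutative domain, `Λ` an `R`-algebra, and `L`, `M`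
`Λ`-modules that are finitely generated over `R`.  Let `tL ⊆ L`, `tM ⊆ M` be the
`R`-torsion submodules (which are `Λ`-submodules).  If `Ext¹_Λ(L, tM) = 0`, then
`Hom_Λ(L,M)/t(Hom_Λ(L,M)) ≅ Hom_Λ(L/tL, M/tM)`, where `t(Hom_Λ(L,M))` is the `R`-torsion
submodule of `Hom_Λ(L,M)`. -/
theorem hom_mod_torsion_equiv_hom_of_quotients
    (R : Type u) [CommRing R] [IsDomain R]
    (Λ : Type u) [Ring Λ] [Algebra R Λ] [HasExt.{u} (ModuleCat.{u} Λ)]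
    (L M : Type u)
    [AddCommGroup L] [Module Λ L] [Module R L] [IsScalarTower R Λ L] [Module.Finite R L]
    [AddCommGroup M] [Module Λ M] [Module R M] [IsScalarTower R Λ M] [Module.Finite R M]
    [SMulCommClass Λ R M]
    (tL : Submodule Λ L) (htL : ∀ x : L, x ∈ tL ↔ ∃ r : R, r ≠ 0 ∧ r • x = 0)
    (tM : Submodule Λ M) (htM : ∀ x : M, x ∈ tM ↔ ∃ r : R, r ≠ 0 ∧ r • x = 0)
    (hExt : Subsingleton (Ext (ModuleCat.of Λ L) (ModuleCat.of Λ (↥tM)) 1)) :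
    Nonempty
      (((L →ₗ[Λ] M) ⧸ Submodule.torsion R (L →ₗ[Λ] M)) ≃ₗ[R]
        ((L ⧸ tL) →ₗ[Λ] (M ⧸ tM))) :=
  hom_mod_torsion_equiv_hom_of_quotients_general R Λ L M tL htL tM htM hExt
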